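/- arXiv:1206.3429 — 7 statements merged into one kernel-verified Lean document; each statement's English description precedes it below -/
import Mathlib

section
/- Let 0 < p < 1 and q = 1 − p. For all integers n, x, t and every real r with 0 < r < min(1, p/q), the contiguous relation p·F̃_n(x,t) = F̃_{n+1}(x+1,t+1) − F̃_{n+1}(x+1,t) holds; explicitly, p·∮_{|w|=r} (q + p/w)^t (1 − w)^{−n} w^{x−1} dw = ∮_{|w|=r} (q + p/w)^{t+1} (1 − w)^{−(n+1)} w^{x} dw − ∮_{|w|=r} (q + p/w)^{t} (1 − w)^{−(n+1)} w^{x} dw. -/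
open Complex

/-! On the circle, `(q + p/w)^(t+1) - (q + p/w)^t = (q + p/w)^t · p (1 - w) / w`, which turns the
difference of the two integrands on the right into `p` times the one on the left. The circle
avoids `0`, `1` and the zero `-p/q` of `q + p/w`, so all integrands are continuous on it and the
integrals can be combined. -/

theorem add_div_ne_zero_of_norm_mul_lt {a b w : ℂ} (hw : w ≠ 0) (h : ‖a‖ * ‖w‖ < ‖b‖) :
    a + b / w ≠ 0 := by
  intro hzero
  have hb : b = -(a * w) := by
    field_simp at hzero
    linear_combination hzero
  rw [hb, norm_neg, norm_mul] at h
  exact lt_irrefl _ h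

theorem integrand_denominators_ne_zero_of_mem_sphere {p r : ℝ} (hp1 : p < 1) (hr0 : 0 < r)
    (hr1 : r < min 1 (p / (1 - p))) {w : ℂ} (hw : w ∈ Metric.sphere (0 : ℂ) r) :
    w ≠ 0 ∧ 1 - w ≠ 0 ∧ (1 - p : ℂ) + p / w ≠ 0 := by
  have hnorm : ‖w‖ = r := by simpa using hw
  have hw0 : w ≠ 0 := norm_pos_iff.mp (hnorm ▸ hr0)
  refine ⟨hw0, fun h => ?_, add_div_ne_zero_of_norm_mul_lt hw0 ?_⟩
  · have : ‖w‖ = 1 := by rw [← sub_eq_zero.mp h, norm_one]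
    linarith [min_le_left 1 (p / (1 - p))]
  · have hq : 0 < 1 - p := by linarith
    have hrp : r * (1 - p) < p := (lt_div_iff₀ hq).mp (hr1.trans_le (min_le_right _ _))
    have : ‖(1 - p : ℂ)‖ = 1 - p := by
      rw [← ofReal_one, ← ofReal_sub, norm_real, Real.norm_of_nonneg hq.le]
    rw [this, hnorm, norm_real]
    linarith [le_abs_self p, Real.norm_eq_abs p]

theorem continuousOn_integrand {p : ℂ} {s : Set ℂ} (a b c : ℤ)
    (hs : ∀ w ∈ s, w ≠ 0 ∧ 1 - w ≠ 0 ∧ 1 - p + p / w ≠ 0) :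
    ContinuousOn (fun w : ℂ => (1 - p + p / w) ^ a * (1 - w) ^ b * w ^ c) s := by
  fun_prop (disch := grind)

theorem contiguous_integrand_identity {p w : ℂ} (t n x : ℤ) (hw0 : w ≠ 0) (hw1 : 1 - w ≠ 0)
    (hz : 1 - p + p / w ≠ 0) :
    p * ((1 - p + p / w) ^ t * (1 - w) ^ (-n) * w ^ (x - 1)) =
      (1 - p + p / w) ^ (t + 1) * (1 - w) ^ (-(n + 1)) * w ^ x -
        (1 - p + p / w) ^ t * (1 - w) ^ (-(n + 1)) * w ^ x := by
  rw [zpow_add_one₀ hz, neg_add, zpow_add₀ hw1, zpow_neg_one, zpow_sub_one₀ hw0]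
  field_simp
  ring

theorem contiguous_relation_time_general (p : ℝ) (hp1 : p < 1) (n x t : ℤ)
    (r : ℝ) (hr0 : 0 < r) (hr1 : r < min 1 (p / (1 - p))) :
    (p : ℂ) * (∮ w in C(0, r), ((1 - p : ℂ) + p / w) ^ t * (1 - w) ^ (-n) * w ^ (x - 1)) =
      (∮ w in C(0, r), ((1 - p : ℂ) + p / w) ^ (t + 1) * (1 - w) ^ (-(n + 1)) * w ^ x) -
        (∮ w in C(0, r), ((1 - p : ℂ) + p / w) ^ t * (1 - w) ^ (-(n + 1)) * w ^ x) := by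
  have hsphere := fun w (hw : w ∈ Metric.sphere (0 : ℂ) r) =>
    integrand_denominators_ne_zero_of_mem_sphere hp1 hr0 hr1 hw
  have hint : ∀ a b c : ℤ, CircleIntegrable
      (fun w : ℂ => ((1 - p : ℂ) + p / w) ^ a * (1 - w) ^ b * w ^ c) 0 r := fun a b c =>
    (continuousOn_integrand a b c hsphere).circleIntegrable hr0.le
  rw [← circleIntegral.integral_sub (hint _ _ _) (hint _ _ _), ← circleIntegral.integral_const_mul]
  refine circleIntegral.integral_congr hr0.le fun w hw => ?_
  obtain ⟨hw0, hw1, hz⟩ := hsphere w hw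
  exact contiguous_integrand_identity t n x hw0 hw1 hz

/-- the contiguous relation `p·F̃_n(x,t) = F̃_{n+1}(x+1,t+1) − F̃_{n+1}(x+1,t)`
for the contour integrals defining `F̃`. -/
theorem contiguous_relation_time (p : ℝ) (hp0 : 0 < p) (hp1 : p < 1) (n x t : ℤ)
    (r : ℝ) (hr0 : 0 < r) (hr1 : r < min 1 (p / (1 - p))) :
    (p : ℂ) * (∮ w in C(0, r), ((1 - p : ℂ) + p / w) ^ t * (1 - w) ^ (-n) * w ^ (x - 1)) =
      (∮ w in C(0, r), ((1 - p : ℂ) + p / w) ^ (t + 1) * (1 - w) ^ (-(n + 1)) * w ^ x) -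
        (∮ w in C(0, r), ((1 - p : ℂ) + p / w) ^ t * (1 - w) ^ (-(n + 1)) * w ^ x) :=
  contiguous_relation_time_general p hp1 n x t r hr0 hr1
end

section
/- Let 0 < p < 1, q = 1 − p, let b be a boundary with exit weights π, let k ≥ 1 be an integer, and let c₀ ∈ ℤ × ℤ. Then for every integer n and every τ ∈ ℤ the unified contiguous relation holds: π(τ) · F̃_n(b_k(τ) − c₀) = F̃_{n+1}(b_{k−1}(τ+1) − c₀) − F̃_{n+1}(b_{k−1}(τ) − c₀), where b_{k−1}(τ) = b(τ) + (−(k−2), 0) and the subtraction of c₀ is componentwise. -/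
open Complex

/-- A staircase-like boundary in the space-time plane: at each `τ` the boundary makes
either a horizontal step `(-1, 0)` or a vertical step `(0, 1)`. -/
structure Boundary where
  b : ℤ → ℤ × ℤ
  step : ∀ τ : ℤ, b (τ + 1) = b τ + (-1, 0) ∨ b (τ + 1) = b τ + (0, 1)

/-- Exit weight: `p` for a vertical step, `1` for a horizontal step. -/
def exitWeight (p : ℝ) (B : Boundary) (τ : ℤ) : ℝ :=
  if B.b (τ + 1) = B.b τ + (0, 1) then p else 1

/-- The function `F̃_n(x,t)` as a contour integral over the circle `|w| = r`,
`0 < r < min 1 (p/q)`. -/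
noncomputable def Ftilde (p r : ℝ) (n : ℤ) (z : ℤ × ℤ) : ℂ :=
  (2 * Real.pi * Complex.I)⁻¹ *
    ∮ w in C(0, r), ((1 - p : ℂ) + p / w) ^ z.2 * (1 - w) ^ (-n) * w ^ (z.1 - 1)

/-! Both steps of the boundary reduce to an identity of integrands on the circle `|w| = r`.
With `A(w) = q + p/w`, a horizontal step uses `(1 - w)^{-(n+1)} · (1 - w) = (1 - w)^{-n}`,
and a vertical step uses `A(w) - 1 = p (1 - w) / w`. The radius bound keeps the circle away
from the poles `0`, `1` and `-p/q` of the integrand, so all integrals involved exist. -/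

open Metric

lemma one_sub_add_div_ne_zero {p : ℝ} {w : ℂ} (hw : ‖w‖ < p / (1 - p)) :
    (1 - p : ℂ) + p / w ≠ 0 := by
  have hq : 1 - p ≠ 0 := by
    intro hq
    rw [hq, div_zero] at hw
    exact (norm_nonneg w).not_gt hw
  intro h
  have hw0 : w ≠ 0 := by
    rintro rfl
    exact hq (by exact_mod_cast (by simpa using h : (1 : ℂ) - p = 0))
  have hnorm : |1 - p| * ‖w‖ = |p| := by
    have hlin : (1 - p : ℂ) * w = -p := by
      field_simp at h
      linear_combination h
    simpa [← ofReal_one, ← ofReal_sub, Complex.norm_real] using congrArg norm hlin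
  have : p / (1 - p) ≤ ‖w‖ := by
    rw [← mul_div_cancel_left₀ ‖w‖ (abs_ne_zero.mpr hq), hnorm, ← abs_div]
    exact le_abs_self _
  linarith

noncomputable def ftildeKernel (p : ℝ) (n : ℤ) (z : ℤ × ℤ) (w : ℂ) : ℂ :=
  ((1 - p : ℂ) + p / w) ^ z.2 * (1 - w) ^ (-n) * w ^ (z.1 - 1)

section Circle

variable {p r : ℝ}

lemma ftildeKernel_poles_off_sphere (hr0 : 0 < r) (hr1 : r < min 1 (p / (1 - p)))
    {w : ℂ} (hw : w ∈ sphere (0 : ℂ) r) :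
    w ≠ 0 ∧ 1 - w ≠ 0 ∧ (1 - p : ℂ) + p / w ≠ 0 := by
  rw [mem_sphere_zero_iff_norm] at hw
  refine ⟨?_, ?_, one_sub_add_div_ne_zero (by rw [hw]; exact hr1.trans_le (min_le_right _ _))⟩
  · rintro rfl
    simp only [norm_zero] at hw
    linarith
  · rw [sub_ne_zero]
    rintro rfl
    simp only [norm_one] at hw
    linarith [min_le_left 1 (p / (1 - p))]

lemma circleIntegrable_ftildeKernel (hr0 : 0 < r) (hr1 : r < min 1 (p / (1 - p)))
    (n : ℤ) (z : ℤ × ℤ) :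
    CircleIntegrable (ftildeKernel p n z) 0 r := by
  apply ContinuousOn.circleIntegrable hr0.le
  have poles := fun w hw ↦ ftildeKernel_poles_off_sphere hr0 hr1 (p := p) (w := w) hw
  refine ((ContinuousOn.zpow₀ ?_ _ fun w hw ↦ Or.inl (poles w hw).2.2).mul
    ((continuousOn_const.sub continuousOn_id).zpow₀ _ fun w hw ↦ Or.inl (poles w hw).2.1)).mul
    (continuousOn_id.zpow₀ _ fun w hw ↦ Or.inl (poles w hw).1)
  exact continuousOn_const.add (continuousOn_const.div continuousOn_id fun w hw ↦ (poles w hw).1)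

lemma mul_Ftilde_eq_sub_of_kernel (hr0 : 0 < r) (hr1 : r < min 1 (p / (1 - p)))
    {c : ℂ} {n m : ℤ} {z z₁ z₂ : ℤ × ℤ}
    (h : ∀ w ∈ sphere (0 : ℂ) r,
      c * ftildeKernel p n z w = ftildeKernel p m z₁ w - ftildeKernel p m z₂ w) :
    c * Ftilde p r n z = Ftilde p r m z₁ - Ftilde p r m z₂ := by
  change c * ((2 * Real.pi * I)⁻¹ * ∮ w in C(0, r), ftildeKernel p n z w) =
    (2 * Real.pi * I)⁻¹ * (∮ w in C(0, r), ftildeKernel p m z₁ w) -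
      (2 * Real.pi * I)⁻¹ * ∮ w in C(0, r), ftildeKernel p m z₂ w
  rw [mul_left_comm, ← mul_sub, ← circleIntegral.integral_const_mul,
    ← circleIntegral.integral_sub (circleIntegrable_ftildeKernel hr0 hr1 m z₁)
      (circleIntegrable_ftildeKernel hr0 hr1 m z₂),
    circleIntegral.integral_congr hr0.le h]

lemma Ftilde_horizontal_step (hr0 : 0 < r) (hr1 : r < min 1 (p / (1 - p)))
    (n : ℤ) (z : ℤ × ℤ) :
    Ftilde p r n (z + (-1, 0)) = Ftilde p r (n + 1) (z + (-1, 0)) - Ftilde p r (n + 1) z := by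
  rw [← one_mul (Ftilde p r n _)]
  refine mul_Ftilde_eq_sub_of_kernel hr0 hr1 fun w hw ↦ ?_
  obtain ⟨hw0, hw1, -⟩ := ftildeKernel_poles_off_sphere hr0 hr1 hw
  have hpow : w ^ (z.1 - 1) = w ^ (z.1 + -1 - 1) * w := by
    rw [← zpow_add_one₀ hw0]; ring_nf
  simp only [ftildeKernel, Prod.fst_add, Prod.snd_add, add_zero, hpow, neg_add,
    zpow_add₀ hw1, zpow_neg_one]
  field_simp

lemma Ftilde_vertical_step (hr0 : 0 < r) (hr1 : r < min 1 (p / (1 - p)))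
    (n : ℤ) (z : ℤ × ℤ) :
    (p : ℂ) * Ftilde p r n (z + (-1, 0)) =
      Ftilde p r (n + 1) (z + (0, 1)) - Ftilde p r (n + 1) z := by
  refine mul_Ftilde_eq_sub_of_kernel hr0 hr1 fun w hw ↦ ?_
  obtain ⟨hw0, hw1, hA⟩ := ftildeKernel_poles_off_sphere hr0 hr1 hw
  have hpow : w ^ (z.1 - 1) = w ^ (z.1 + -1 - 1) * w := by
    rw [← zpow_add_one₀ hw0]; ring_nf
  simp only [ftildeKernel, Prod.fst_add, Prod.snd_add, add_zero, hpow, neg_add,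
    zpow_add₀ hw1, zpow_neg_one, zpow_add_one₀ hA]
  field_simp
  ring

end Circle

theorem contiguous_relation_boundary_general (p : ℝ)
    (B : Boundary) (k : ℤ) (c₀ : ℤ × ℤ)
    (r : ℝ) (hr0 : 0 < r) (hr1 : r < min 1 (p / (1 - p)))
    (n τ : ℤ) :
    (exitWeight p B τ : ℂ) * Ftilde p r n (B.b τ + (-(k - 1), 0) - c₀) =
      Ftilde p r (n + 1) (B.b (τ + 1) + (-(k - 2), 0) - c₀) -
        Ftilde p r (n + 1) (B.b τ + (-(k - 2), 0) - c₀) := by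
  set z := B.b τ + (-(k - 2), 0) - c₀
  have hz : B.b τ + (-(k - 1), 0) - c₀ = z + (-1, 0) := by
    ext <;> simp only [z, Prod.fst_add, Prod.fst_sub, Prod.snd_add, Prod.snd_sub] <;> ring
  have shift (s : ℤ × ℤ) : B.b τ + s + (-(k - 2), 0) - c₀ = z + s := by
    simp only [z]; abel
  rw [hz]
  rcases B.step τ with h | h
  · have hvert : B.b (τ + 1) ≠ B.b τ + (0, 1) := by simp [h]
    rw [exitWeight, if_neg hvert, h, shift, ofReal_one, one_mul]
    exact Ftilde_horizontal_step hr0 hr1 n z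
  · rw [exitWeight, if_pos h, h, shift]
    exact Ftilde_vertical_step hr0 hr1 n z

/-- the unified contiguous relation along a boundary:
`π(τ)·F̃_n(b_k(τ) − c₀) = F̃_{n+1}(b_{k−1}(τ+1) − c₀) − F̃_{n+1}(b_{k−1}(τ) − c₀)`. -/
theorem contiguous_relation_boundary (p : ℝ) (hp0 : 0 < p) (hp1 : p < 1)
    (B : Boundary) (k : ℤ) (hk : 1 ≤ k) (c₀ : ℤ × ℤ)
    (r : ℝ) (hr0 : 0 < r) (hr1 : r < min 1 (p / (1 - p)))
    (n τ : ℤ) :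
    (exitWeight p B τ : ℂ) * Ftilde p r n (B.b τ + (-(k - 1), 0) - c₀) =
      Ftilde p r (n + 1) (B.b (τ + 1) + (-(k - 2), 0) - c₀) -
        Ftilde p r (n + 1) (B.b τ + (-(k - 2), 0) - c₀) :=
  contiguous_relation_boundary_general p B k c₀ r hr0 hr1 n τ
end

section
/- Let 0 < p < 1, q = 1 − p, and let b be a boundary with coordinates b(τ) = (x(τ), t(τ)) and exit weights π. Then for all τ₁, τ₂ ∈ ℤ and every radius r with 1/2 < r < 1/2 + p/q: π(τ₂)·[τ₂ ≥ τ₁] = (2πi)^{−1} ∮_{|w−1/2|=r} (q + p/w)^{t(τ₁)−t(τ₂)} w^{x(τ₁)−x(τ₂)+1} / ( w² (w−1) (1/w + 1/π(τ₂) − 1) ) dw, where [τ₂ ≥ τ₁] equals 1 if τ₂ ≥ τ₁ and 0 otherwise. -/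
open Complex

/-! With `q = 1 - p`, on the circle `q + p / w = (q w + p) / w`, and the factor
`1 / w + 1 / π(τ₂) - 1` cancels one power of `q + p / w` (vertical step) or of `w`
(horizontal step). The integrand becomes `π(τ₂) (q + p / w) ^ α w ^ β / (w - 1)` with
exponents read off at `τ₂ + 1`, and `β - α = τ₂ - τ₁` because `t - x` grows by one at each
step. If `τ₁ ≤ τ₂` this is `π(τ₂) (q w + p) ^ α w ^ (β - α) / (w - 1)` with a numerator
holomorphic on the disc (its only singularity `-p/q` lies outside), and Cauchy's formula at
`w = 1` gives `π(τ₂)`. If `τ₁ > τ₂` then `α ≥ 0` and `β ≤ -1`, so the integrand is a combination of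
`w ^ n / (w - 1)` with `n ≤ -1`, whose residues at `0` and `1` cancel. -/

open Metric
open scoped Real

section CircleIntegrals

variable {c : ℂ} {R : ℝ}

theorem circleIntegrable_of_continuousOn_compl_zero_one (h0 : (0 : ℂ) ∈ ball c R)
    (h1 : (1 : ℂ) ∈ ball c R) {f : ℂ → ℂ} (hf : ContinuousOn f {0, 1}ᶜ) :
    CircleIntegrable f c R :=
  (hf.mono fun _ hw => by
    simp [sphere_disjoint_ball.ne_of_mem hw h0, sphere_disjoint_ball.ne_of_mem hw h1]
    ).circleIntegrable (pos_of_mem_ball h0).le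

theorem circleIntegral_div_sub_one (h1 : (1 : ℂ) ∈ ball c R) {f : ℂ → ℂ}
    (hf : DifferentiableOn ℂ f (closedBall c R)) :
    (∮ w in C(c, R), f w / (w - 1)) = 2 * π * I * f 1 :=
  circleIntegral_div_sub_of_differentiable_on_off_countable Set.countable_empty h1
    hf.continuousOn fun _ hz => hf.differentiableAt (closedBall_mem_nhds_of_mem hz.1)

theorem circleIntegral_zpow_sub_one_div_sub_one (h0 : (0 : ℂ) ∈ ball c R)
    (h1 : (1 : ℂ) ∈ ball c R) (n : ℤ) :
    (∮ w in C(c, R), w ^ (n - 1) / (w - 1)) =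
      (∮ w in C(c, R), w ^ n / (w - 1)) - ∮ w in C(c, R), w ^ (n - 1) := by
  rw [← circleIntegral.integral_sub
    (circleIntegrable_of_continuousOn_compl_zero_one h0 h1
      (by fun_prop (disch := intro w hw; simp_all [sub_eq_zero])))
    (circleIntegrable_of_continuousOn_compl_zero_one h0 h1
      (by fun_prop (disch := intro w hw; simp_all)))]
  refine circleIntegral.integral_congr (pos_of_mem_ball h0).le fun w hw => ?_
  have hw0 : w ≠ 0 := sphere_disjoint_ball.ne_of_mem hw h0
  have hw1 : w - 1 ≠ 0 := sub_ne_zero.2 (sphere_disjoint_ball.ne_of_mem hw h1)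
  simp only [zpow_sub_one₀ hw0]
  field_simp
  ring

theorem circleIntegral_zpow_div_sub_one_of_neg (h0 : (0 : ℂ) ∈ ball c R)
    (h1 : (1 : ℂ) ∈ ball c R) {n : ℤ} (hn : n ≤ -1) :
    (∮ w in C(c, R), w ^ n / (w - 1)) = 0 := by
  induction n, hn using Int.leInductionDown with
  | base =>
    -- `1 / (w (w - 1)) = 1 / (w - 1) - 1 / w`, and both terms integrate to `2πi`
    have h := circleIntegral_zpow_sub_one_div_sub_one h0 h1 0
    have hc := circleIntegral_div_sub_one h1 (differentiableOn_const (1 : ℂ))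
    have hi := circleIntegral.integral_sub_inv_of_mem_ball h0
    simp_all
  | pred n hn ih =>
    rw [circleIntegral_zpow_sub_one_div_sub_one h0 h1, ih, zero_sub, neg_eq_zero]
    simpa using circleIntegral.integral_sub_zpow_of_ne (by omega : n - 1 ≠ -1) c 0 R

theorem circleIntegral_zpow_mul_zpow_div_sub_one_of_nonneg_of_neg
    (h0 : (0 : ℂ) ∈ ball c R) (h1 : (1 : ℂ) ∈ ball c R) (p : ℂ) {α n : ℤ} (hα : 0 ≤ α)
    (hn : n ≤ -1) :
    (∮ w in C(c, R), (1 - p + p / w) ^ α * w ^ n / (w - 1)) = 0 := by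
  lift α to ℕ using hα
  simp only [zpow_natCast]
  induction α generalizing n with
  | zero => simpa using circleIntegral_zpow_div_sub_one_of_neg h0 h1 hn
  | succ a ih =>
    calc _ = ∮ w in C(c, R), (1 - p) * ((1 - p + p / w) ^ a * w ^ n / (w - 1)) +
          p * ((1 - p + p / w) ^ a * w ^ (n - 1) / (w - 1)) := by
          refine circleIntegral.integral_congr (pos_of_mem_ball h0).le fun w hw => ?_
          simp only [zpow_sub_one₀ (sphere_disjoint_ball.ne_of_mem hw h0)]
          ring
      _ = 0 := by
        rw [circleIntegral.integral_add, circleIntegral.integral_const_mul,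
          circleIntegral.integral_const_mul, ih hn, ih (by omega), mul_zero, mul_zero, add_zero]
        all_goals
          refine (circleIntegrable_of_continuousOn_compl_zero_one h0 h1 ?_)
          fun_prop (disch := intro w hw; simp_all [sub_eq_zero])

theorem circleIntegral_zpow_mul_zpow_div_sub_one_of_le (h0 : (0 : ℂ) ∈ ball c R)
    (h1 : (1 : ℂ) ∈ ball c R) {p : ℂ} (hp : ∀ w ∈ closedBall c R, (1 - p) * w + p ≠ 0)
    {α β : ℤ} (hαβ : α ≤ β) :
    (∮ w in C(c, R), (1 - p + p / w) ^ α * w ^ β / (w - 1)) = 2 * π * I := by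
  have hf : DifferentiableOn ℂ (fun w => ((1 - p) * w + p) ^ α * w ^ (β - α))
      (closedBall c R) := by
    have hp' : (∀ w ∈ closedBall c R, (1 - p) * w + p ≠ 0) ∨ 0 ≤ α := Or.inl hp
    have hβα : (∀ w ∈ closedBall c R, w ≠ 0) ∨ 0 ≤ β - α := Or.inr (by omega)
    fun_prop (disch := assumption)
  calc _ = ∮ w in C(c, R), ((1 - p) * w + p) ^ α * w ^ (β - α) / (w - 1) := by
        refine circleIntegral.integral_congr (pos_of_mem_ball h0).le fun w hw => ?_
        have hw0 : w ≠ 0 := sphere_disjoint_ball.ne_of_mem hw h0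
        rw [show 1 - p + p / w = ((1 - p) * w + p) / w by field_simp, div_zpow, zpow_sub₀ hw0]
        field_simp
    _ = 2 * π * I := by simp [circleIntegral_div_sub_one h1 hf]

end CircleIntegrals

theorem one_sub_mul_add_ne_zero_of_mem_closedBall {p r : ℝ} (hr : 1 / 2 < r)
    (hr' : r < 1 / 2 + p / (1 - p)) {w : ℂ} (hw : w ∈ closedBall (1 / 2 : ℂ) r) :
    (1 - p) * w + p ≠ 0 := by
  intro h
  have hc : 0 < p / (1 - p) := by linarith
  have hq : (1 - p : ℂ) ≠ 0 := by
    norm_cast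
    rintro hq
    simp [hq] at hc
  have hw' : w - 1 / 2 = ((-(p / (1 - p) + 1 / 2) : ℝ) : ℂ) := by
    push_cast
    field_simp
    linear_combination 2 * h
  rw [mem_closedBall, dist_eq_norm, hw', Complex.norm_real, Real.norm_eq_abs,
    abs_of_neg (by linarith)] at hw
  linarith

namespace Boundary

variable (B : Boundary)

theorem step_fst_snd (τ : ℤ) :
    ((B.b (τ + 1)).1 = (B.b τ).1 - 1 ∧ (B.b (τ + 1)).2 = (B.b τ).2) ∨
      ((B.b (τ + 1)).1 = (B.b τ).1 ∧ (B.b (τ + 1)).2 = (B.b τ).2 + 1) := by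
  rcases B.step τ with h | h <;> simp [h, sub_eq_add_neg]

theorem monotone_snd : Monotone fun τ => (B.b τ).2 :=
  monotone_int_of_le_succ fun τ => by rcases B.step_fst_snd τ with h | h <;> omega

theorem antitone_fst : Antitone fun τ => (B.b τ).1 :=
  antitone_int_of_succ_le fun τ => by rcases B.step_fst_snd τ with h | h <;> omega

theorem snd_sub_fst_eq (τ : ℤ) : (B.b τ).2 - (B.b τ).1 = (B.b 0).2 - (B.b 0).1 + τ := by
  have step (τ : ℤ) : (B.b (τ + 1)).2 - (B.b (τ + 1)).1 = (B.b τ).2 - (B.b τ).1 + 1 := by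
    rcases B.step_fst_snd τ with h | h <;> omega
  induction τ using Int.induction_on with
  | zero => simp
  | succ n ih => rw [step, ih]; ring
  | pred n ih => have := step (-n - 1); rw [sub_add_cancel] at this; omega

theorem integrand_eq_exitWeight_mul (p : ℝ) (hp : p ≠ 0) (τ₁ τ₂ : ℤ) {w : ℂ} (hw : w ≠ 0)
    (hQ : (1 - p) * w + p ≠ 0) :
    ((1 - p : ℂ) + p / w) ^ ((B.b τ₁).2 - (B.b τ₂).2) * w ^ ((B.b τ₁).1 - (B.b τ₂).1 + 1) /
        (w ^ 2 * (w - 1) * (1 / w + 1 / (exitWeight p B τ₂ : ℂ) - 1)) =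
      exitWeight p B τ₂ * (((1 - p : ℂ) + p / w) ^ ((B.b τ₁).2 - (B.b (τ₂ + 1)).2) *
        w ^ ((B.b τ₁).1 - (B.b (τ₂ + 1)).1 - 1) / (w - 1)) := by
  have hQ' : (1 - p : ℂ) + p / w ≠ 0 := by
    rw [show (1 - p : ℂ) + p / w = ((1 - p) * w + p) / w by field_simp]
    exact div_ne_zero hQ hw
  unfold exitWeight
  rcases B.step τ₂ with h | h
  · have hne : B.b τ₂ + (-1, 0) ≠ B.b τ₂ + (0, 1) := by simp
    rw [if_neg (h ▸ hne), h]
    simp only [Prod.fst_add, Prod.snd_add, add_zero,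
      show ∀ x y : ℤ, x - (y + -1) - 1 = x - y by omega]
    rw [zpow_add_one₀ hw]
    push_cast
    field_simp
    ring
  · rw [if_pos h, h]
    simp only [Prod.fst_add, Prod.snd_add, add_zero,
      show ∀ x y : ℤ, x - (y + 1) = (x - y) - 1 by omega]
    have hp' : (p : ℂ) ≠ 0 := ofReal_ne_zero.2 hp
    have hD : 1 / w + 1 / (p : ℂ) - 1 = (1 - p + p / w) / p := by field_simp; ring
    rw [hD, zpow_add_one₀ hw, zpow_sub_one₀ hQ', zpow_sub_one₀ hw]
    field_simp

end Boundary

theorem phi_integral_representation_general (p : ℝ)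
    (B : Boundary) (τ₁ τ₂ : ℤ) (r : ℝ) (hr1 : 1/2 < r) (hr2 : r < 1/2 + p / (1 - p)) :
    (if τ₁ ≤ τ₂ then (exitWeight p B τ₂ : ℂ) else 0) =
      (2 * Real.pi * Complex.I)⁻¹ *
        ∮ w in C(1/2, r),
          ((1 - p : ℂ) + p / w) ^ ((B.b τ₁).2 - (B.b τ₂).2) *
              w ^ ((B.b τ₁).1 - (B.b τ₂).1 + 1) /
            (w ^ 2 * (w - 1) * (1 / w + 1 / (exitWeight p B τ₂ : ℂ) - 1)) := by
  have hp : p ≠ 0 := fun h => by simp [h] at hr2; linarith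
  have h0 : (0 : ℂ) ∈ ball (1 / 2) r := by rw [mem_ball, dist_eq_norm]; norm_num; linarith
  have h1 : (1 : ℂ) ∈ ball (1 / 2) r := by rw [mem_ball, dist_eq_norm]; norm_num; linarith
  have hQ : ∀ w ∈ closedBall (1 / 2 : ℂ) r, (1 - (p : ℂ)) * w + p ≠ 0 := fun _ =>
    one_sub_mul_add_ne_zero_of_mem_closedBall hr1 hr2
  rw [circleIntegral.integral_congr (pos_of_mem_ball h0).le fun w hw =>
    B.integrand_eq_exitWeight_mul p hp τ₁ τ₂ (sphere_disjoint_ball.ne_of_mem hw h0)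
      (hQ w (sphere_subset_closedBall hw)), circleIntegral.integral_const_mul]
  have hτ₁ := B.snd_sub_fst_eq τ₁
  have hτ₂ := B.snd_sub_fst_eq (τ₂ + 1)
  split_ifs with h
  · rw [circleIntegral_zpow_mul_zpow_div_sub_one_of_le h0 h1 hQ (by omega)]
    field_simp
  · have ht := B.monotone_snd (by omega : τ₂ + 1 ≤ τ₁)
    have hx := B.antitone_fst (by omega : τ₂ + 1 ≤ τ₁)
    rw [circleIntegral_zpow_mul_zpow_div_sub_one_of_nonneg_of_neg h0 h1 _
      (by simp only at ht; omega) (by simp only at hx; omega), mul_zero, mul_zero]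

/-- integral representation of the one-step transition function
`φ(τ₁,τ₂) = π(τ₂)·[τ₂ ≥ τ₁]`. -/
theorem phi_integral_representation (p : ℝ) (hp0 : 0 < p) (hp1 : p < 1)
    (B : Boundary) (τ₁ τ₂ : ℤ) (r : ℝ) (hr1 : 1/2 < r) (hr2 : r < 1/2 + p / (1 - p)) :
    (if τ₁ ≤ τ₂ then (exitWeight p B τ₂ : ℂ) else 0) =
      (2 * Real.pi * Complex.I)⁻¹ *
        ∮ w in C(1/2, r),
          ((1 - p : ℂ) + p / w) ^ ((B.b τ₁).2 - (B.b τ₂).2) *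
              w ^ ((B.b τ₁).1 - (B.b τ₂).1 + 1) /
            (w ^ 2 * (w - 1) * (1 / w + 1 / (exitWeight p B τ₂ : ℂ) - 1)) :=
  phi_integral_representation_general p B τ₁ τ₂ r hr1 hr2
end

section
/- Let 0 < p < 1, q = 1 − p, and let γ, ω, ν > 0 be reals satisfying the hydrodynamic relation √(pω) = √γ + √(qν). Define f : ℝ → ℝ by f(w) = ω·log(q + p/w) + ν·log((w−1)/w) + γ·log w, and set w₀ = 1 + √(ν/(qγ)). Then w₀ is a double critical point of f: f′(w₀) = 0 and f″(w₀) = 0. -/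
/-!
Write `f'(w) = h(w) / w` with `h(w) = γ + ν / (w - 1) - p ω / (q w + p)`. Then `f'(w₀) = 0` and
`f''(w₀) = 0` both follow from `h(w₀) = h'(w₀) = 0`. With `s = w₀ - 1` one has `ν = q γ s²` and
`q w₀ + p = 1 + q s`, while squaring the hydrodynamic relation gives `p ω = γ (1 + q s)²`; so
`h(w₀) = γ + q γ s - γ (1 + q s) = 0` and `h'(w₀) = -ν / s² + q p ω / (1 + q s)² = -q γ + q γ = 0`.
-/

open Real Filter Topology

theorem deriv_eq_zero_and_deriv_deriv_eq_zero_of_hasDerivAt_div {f h : ℝ → ℝ} {x₀ : ℝ}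
    (hf : ∀ᶠ x in 𝓝 x₀, HasDerivAt f (h x / x) x) (hx₀ : x₀ ≠ 0)
    (hh : HasDerivAt h 0 x₀) (hh₀ : h x₀ = 0) :
    deriv f x₀ = 0 ∧ deriv (deriv f) x₀ = 0 := by
  have hderiv : deriv f =ᶠ[𝓝 x₀] fun x => h x / x := hf.mono fun x hx => hx.deriv
  refine ⟨by rw [hderiv.eq_of_nhds, hh₀, zero_div], ?_⟩
  rw [hderiv.deriv_eq]
  simpa [hh₀] using (hh.fun_div (hasDerivAt_id' x₀) hx₀).deriv

namespace DoubleCriticalPoint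

variable {p γ ω ν w : ℝ}

noncomputable def potential (p γ ω ν : ℝ) (w : ℝ) : ℝ :=
  ω * log ((1 - p) + p / w) + ν * log ((w - 1) / w) + γ * log w

/-- `w · f'(w)`, the derivative of the potential in the variable `log w`. -/
noncomputable def scaledDeriv (p γ ω ν : ℝ) (w : ℝ) : ℝ :=
  γ + ν / (w - 1) - p * ω / ((1 - p) * w + p)

lemma one_sub_mul_add_pos (hp : p ≤ 1) (hw : 1 < w) : 0 < (1 - p) * w + p := by
  nlinarith

lemma hasDerivAt_potential (hp : p ≤ 1) (hw : 1 < w) :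
    HasDerivAt (potential p γ ω ν) (scaledDeriv p γ ω ν w / w) w := by
  have hw₀ : w ≠ 0 := by positivity
  have hw₁ : w - 1 ≠ 0 := sub_ne_zero.mpr hw.ne'
  have hqw : (1 - p) * w + p ≠ 0 := (one_sub_mul_add_pos hp hw).ne'
  have hfirst : (1 - p) + p / w ≠ 0 := by
    rw [show (1 - p) + p / w = ((1 - p) * w + p) / w by field_simp]
    exact div_ne_zero hqw hw₀
  have hsecond : (w - 1) / w ≠ 0 := div_ne_zero hw₁ hw₀
  have h₁ := ((((hasDerivAt_const w p).fun_div (hasDerivAt_id' w) hw₀).const_add (1 - p)).log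
    hfirst).const_mul ω
  have h₂ := ((((hasDerivAt_id' w).sub_const 1).fun_div (hasDerivAt_id' w) hw₀).log
    hsecond).const_mul ν
  have h₃ := (hasDerivAt_log hw₀).const_mul γ
  refine ((h₁.fun_add h₂).fun_add h₃).congr_deriv ?_
  rw [scaledDeriv]
  field_simp
  ring

lemma hasDerivAt_scaledDeriv (hp : p ≤ 1) (hw : 1 < w) :
    HasDerivAt (scaledDeriv p γ ω ν)
      (-ν / (w - 1) ^ 2 + (1 - p) * (p * ω) / ((1 - p) * w + p) ^ 2) w := by
  have hw₁ : w - 1 ≠ 0 := sub_ne_zero.mpr hw.ne'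
  have hqw : (1 - p) * w + p ≠ 0 := (one_sub_mul_add_pos hp hw).ne'
  have h₁ := (hasDerivAt_const w ν).fun_div ((hasDerivAt_id' w).sub_const 1) hw₁
  have h₂ := (hasDerivAt_const w (p * ω)).fun_div
    (((hasDerivAt_id' w).const_mul (1 - p)).add_const p) hqw
  refine (((hasDerivAt_const w γ).fun_add h₁).fun_sub h₂).congr_deriv ?_
  ring

lemma mul_eq_of_sqrt_eq_sqrt_add_sqrt (hp : p < 1) (hγ : 0 < γ) (hν : 0 ≤ ν)
    (hrel : √(p * ω) = √γ + √((1 - p) * ν)) :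
    p * ω = γ * (1 + (1 - p) * √(ν / ((1 - p) * γ))) ^ 2 := by
  set s := √(ν / ((1 - p) * γ))
  have hq : 0 < 1 - p := sub_pos.mpr hp
  have hqν : (1 - p) * ν = ((1 - p) * s * √γ) ^ 2 := by
    rw [mul_pow, mul_pow, sq_sqrt (by positivity), sq_sqrt hγ.le]
    field_simp
  have hsqrt : √(p * ω) = √γ * (1 + (1 - p) * s) := by
    rw [hrel, hqν, sqrt_sq (by positivity)]
    ring
  rw [sqrt_eq_iff_mul_self_eq_of_pos (by positivity)] at hsqrt
  rw [← hsqrt, mul_mul_mul_comm, mul_self_sqrt hγ.le, sq]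

section Parametrized

variable {s : ℝ} (hp : p ≤ 1) (hs : 0 < s) (hν : ν = (1 - p) * γ * s ^ 2)
  (hω : p * ω = γ * (1 + (1 - p) * s) ^ 2)
include hp hs hν hω

lemma scaledDeriv_one_add_eq_zero : scaledDeriv p γ ω ν (1 + s) = 0 := by
  have hqs : 0 < 1 + (1 - p) * s := by nlinarith
  rw [scaledDeriv, add_sub_cancel_left, show (1 - p) * (1 + s) + p = 1 + (1 - p) * s by ring,
    hν, hω]
  field_simp
  ring

lemma hasDerivAt_scaledDeriv_one_add : HasDerivAt (scaledDeriv p γ ω ν) 0 (1 + s) := by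
  have hqs : 0 < 1 + (1 - p) * s := by nlinarith
  refine (hasDerivAt_scaledDeriv hp (by linarith)).congr_deriv ?_
  rw [add_sub_cancel_left, show (1 - p) * (1 + s) + p = 1 + (1 - p) * s by ring, hν, hω]
  field_simp
  ring

end Parametrized

end DoubleCriticalPoint

open DoubleCriticalPoint in
theorem double_critical_point_general (p γ ω ν : ℝ) (hp1 : p < 1)
    (hγ : 0 < γ) (hν : 0 < ν)
    (hrel : Real.sqrt (p * ω) = Real.sqrt γ + Real.sqrt ((1 - p) * ν)) :
    deriv (fun w : ℝ =>
        ω * Real.log ((1 - p) + p / w) + ν * Real.log ((w - 1) / w) + γ * Real.log w)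
      (1 + Real.sqrt (ν / ((1 - p) * γ))) = 0 ∧
    deriv (deriv (fun w : ℝ =>
        ω * Real.log ((1 - p) + p / w) + ν * Real.log ((w - 1) / w) + γ * Real.log w))
      (1 + Real.sqrt (ν / ((1 - p) * γ))) = 0 := by
  have hω := mul_eq_of_sqrt_eq_sqrt_add_sqrt hp1 hγ hν.le hrel
  set s := √(ν / ((1 - p) * γ)) with hs_def
  have hq : 0 < 1 - p := sub_pos.mpr hp1
  have hs : 0 < s := sqrt_pos.mpr (by positivity)
  have hνs : ν = (1 - p) * γ * s ^ 2 := by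
    rw [hs_def, sq_sqrt (by positivity)]
    field_simp
  exact deriv_eq_zero_and_deriv_deriv_eq_zero_of_hasDerivAt_div (f := potential p γ ω ν)
    ((eventually_gt_nhds (by linarith)).mono fun w hw => hasDerivAt_potential hp1.le hw)
    (by positivity) (hasDerivAt_scaledDeriv_one_add hp1.le hs hνs hω)
    (scaledDeriv_one_add_eq_zero hp1.le hs hνs hω)

/-- `w₀ = 1 + √(ν/(qγ))` is a double critical point of
`f(w) = ω·log(q + p/w) + ν·log((w−1)/w) + γ·log w` under the hydrodynamic relation
`√(pω) = √γ + √(qν)`. -/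
theorem double_critical_point (p γ ω ν : ℝ) (hp0 : 0 < p) (hp1 : p < 1)
    (hγ : 0 < γ) (hω : 0 < ω) (hν : 0 < ν)
    (hrel : Real.sqrt (p * ω) = Real.sqrt γ + Real.sqrt ((1 - p) * ν)) :
    deriv (fun w : ℝ =>
        ω * Real.log ((1 - p) + p / w) + ν * Real.log ((w - 1) / w) + γ * Real.log w)
      (1 + Real.sqrt (ν / ((1 - p) * γ))) = 0 ∧
    deriv (deriv (fun w : ℝ =>
        ω * Real.log ((1 - p) + p / w) + ν * Real.log ((w - 1) / w) + γ * Real.log w))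
      (1 + Real.sqrt (ν / ((1 - p) * γ))) = 0 :=
  double_critical_point_general p γ ω ν hp1 hγ hν hrel
end

section
/- Let 0 < p < 1, q = 1 − p, and let γ, ω, ν > 0 be reals satisfying the hydrodynamic relation √(pω) = √γ + √(qν). Define f : ℝ → ℝ by f(w) = ω·log(q + p/w) + ν·log((w−1)/w) + γ·log w, and set w₀ = 1 + √(ν/(qγ)). Then the third derivative of f at w₀ equals f‴(w₀) = 2 q³ γ^{5/2} / ( p √ω (√ω − √(pγ)) (√(pω) − √γ) ); in particular f‴(w₀) > 0. -/
/-!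
On `w > 1` the function splits as `ω log(qw + p) + ν log(w - 1) + (γ - ω - ν) log w`, a
combination of logarithms of affine functions, and `(log (aw + b))''' = 2a³/(aw + b)³`.
Writing `a = √γ` and `b = √(qν)`, the relation gives `pω = (a + b)²`, and the critical point is
`w₀ = 1 + b/(qa)`, where `qw₀ + p = (a + b)/a`, and the denominator of the claimed value is
`(a + b)(qa + b)b`; the formula for `f'''(w₀)` is then a rational identity in `p, a, b`.
-/

open Real

theorem Real.deriv_log_mul_add (a b x : ℝ) :
    deriv (fun x => log (a * x + b)) x = a * (a * x + b)⁻¹ := by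
  rw [deriv_comp_mul_left (f := fun y => log (y + b)), deriv_comp_add_const, deriv_log,
    smul_eq_mul]

theorem Real.iteratedDeriv_succ_log_mul_add (n : ℕ) (a b x : ℝ) :
    iteratedDeriv (n + 1) (fun x => log (a * x + b)) x =
      (-1) ^ n * n.factorial * a ^ (n + 1) * (a * x + b) ^ (-1 - n : ℤ) := by
  rw [iteratedDeriv_succ', funext (deriv_log_mul_add a b), iteratedDeriv_const_mul_field,
    iteratedDeriv_eq_iterate, iter_deriv_inv_linear]
  ring

theorem Real.iteratedDeriv_three_const_mul_log_mul_add (c a b x : ℝ) :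
    iteratedDeriv 3 (fun x => c * log (a * x + b)) x = 2 * c * a ^ 3 / (a * x + b) ^ 3 := by
  rw [iteratedDeriv_const_mul_field, iteratedDeriv_succ_log_mul_add]
  norm_num [zpow_neg, div_eq_mul_inv]
  ring

theorem Real.contDiffAt_const_mul_log_mul_add {n : WithTop ℕ∞} {c a b x : ℝ}
    (h : a * x + b ≠ 0) : ContDiffAt ℝ n (fun x => c * log (a * x + b)) x := by
  fun_prop (disch := exact h)

section LogPotential

variable {p γ ω ν x : ℝ}

theorem log_potential_eventuallyEq (hp : p ≤ 1) (hx : 1 < x) :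
    (fun w => ω * log ((1 - p) + p / w) + ν * log ((w - 1) / w) + γ * log w) =ᶠ[nhds x]
      fun w => ω * log ((1 - p) * w + p) + ν * log (1 * w + -1)
        + (γ - ω - ν) * log (1 * w + 0) := by
  filter_upwards [Ioi_mem_nhds hx] with w (hw : 1 < w)
  have hw₀ : w ≠ 0 := by positivity
  have hqw : (1 - p) * w + p ≠ 0 := by nlinarith
  rw [show (1 - p) + p / w = ((1 - p) * w + p) / w by field_simp,
    log_div hqw hw₀, log_div (by linarith) hw₀]
  ring_nf

theorem deriv_deriv_deriv_log_potential (hp : p ≤ 1) (hx : 1 < x) :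
    deriv (deriv (deriv (fun w =>
        ω * log ((1 - p) + p / w) + ν * log ((w - 1) / w) + γ * log w))) x =
      2 * ω * (1 - p) ^ 3 / ((1 - p) * x + p) ^ 3 + 2 * ν / (x - 1) ^ 3
        + 2 * (γ - ω - ν) / x ^ 3 := by
  have h₁ : ContDiffAt ℝ 3 (fun w => ω * log ((1 - p) * w + p)) x :=
    contDiffAt_const_mul_log_mul_add (by nlinarith)
  have h₂ : ContDiffAt ℝ 3 (fun w => ν * log (1 * w + -1)) x :=
    contDiffAt_const_mul_log_mul_add (by linarith)
  have h₃ : ContDiffAt ℝ 3 (fun w => (γ - ω - ν) * log (1 * w + 0)) x :=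
    contDiffAt_const_mul_log_mul_add (by linarith)
  rw [show ∀ f : ℝ → ℝ, deriv (deriv (deriv f)) = iteratedDeriv 3 f from
      fun f => (iteratedDeriv_eq_iterate (n := 3) (f := f)).symm,
    ((log_potential_eventuallyEq hp hx).iteratedDeriv 3).eq_of_nhds,
    iteratedDeriv_fun_add (h₁.add h₂) h₃, iteratedDeriv_fun_add h₁ h₂]
  simp only [iteratedDeriv_three_const_mul_log_mul_add]
  ring

end LogPotential

theorem third_deriv_value_at_critical_point {p a b γ ω ν w : ℝ} (hp0 : 0 < p) (hp1 : p < 1)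
    (ha : 0 < a) (hb : 0 < b) (hγ : a ^ 2 = γ) (hω : p * ω = (a + b) ^ 2)
    (hν : (1 - p) * ν = b ^ 2) (hw : (1 - p) * a * (w - 1) = b) :
    2 * ω * (1 - p) ^ 3 / ((1 - p) * w + p) ^ 3 + 2 * ν / (w - 1) ^ 3
        + 2 * (γ - ω - ν) / w ^ 3 =
      2 * (1 - p) ^ 3 * a ^ 5 / ((a + b) * ((1 - p) * a + b) * b) := by
  subst hγ
  have hq : 0 < 1 - p := by linarith
  have hqa : 0 < (1 - p) * a + b := by positivity
  obtain rfl : ω = (a + b) ^ 2 / p := by field_simp; linear_combination hω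
  obtain rfl : ν = b ^ 2 / (1 - p) := by field_simp; linear_combination hν
  have hw₁ : w - 1 = b / ((1 - p) * a) := by field_simp; linear_combination hw
  have hqw : (1 - p) * w + p = (a + b) / a := by field_simp; linear_combination hw
  have hw' : w = ((1 - p) * a + b) / ((1 - p) * a) := by field_simp; linear_combination hw
  rw [hw₁, hqw, hw']
  field_simp
  ring

theorem hydrodynamic_denominator_eq {p γ ω b : ℝ} (hp : 0 ≤ p) (hrel : √(p * ω) = √γ + b) :
    p * √ω * (√ω - √(p * γ)) * (√(p * ω) - √γ) = (√γ + b) * ((1 - p) * √γ + b) * b := by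
  have hs : √p ^ 2 = p := sq_sqrt hp
  have hst : √p * √ω = √γ + b := by rw [← sqrt_mul hp, hrel]
  rw [hrel, sqrt_mul hp, add_sub_cancel_left]
  linear_combination (-(√ω ^ 2 * b - √ω * √p * √γ * b + √γ * (√γ + b) * b)) * hs
    + (b * (√p * √ω + √γ + b) - √p ^ 2 * √γ * b) * hst

/-- the third derivative of
`f(w) = ω·log(q + p/w) + ν·log((w−1)/w) + γ·log w` at the double critical point
`w₀ = 1 + √(ν/(qγ))` equals `2q³γ^{5/2}/(p√ω(√ω − √(pγ))(√(pω) − √γ))`, and is positive. -/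
theorem third_derivative_at_critical_point (p γ ω ν : ℝ) (hp0 : 0 < p) (hp1 : p < 1)
    (hγ : 0 < γ) (hω : 0 < ω) (hν : 0 < ν)
    (hrel : Real.sqrt (p * ω) = Real.sqrt γ + Real.sqrt ((1 - p) * ν)) :
    deriv (deriv (deriv (fun w : ℝ =>
        ω * Real.log ((1 - p) + p / w) + ν * Real.log ((w - 1) / w) + γ * Real.log w)))
      (1 + Real.sqrt (ν / ((1 - p) * γ))) =
      2 * (1 - p) ^ 3 * γ ^ ((5 : ℝ) / 2) /
        (p * Real.sqrt ω * (Real.sqrt ω - Real.sqrt (p * γ)) *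
          (Real.sqrt (p * ω) - Real.sqrt γ)) ∧
    0 < deriv (deriv (deriv (fun w : ℝ =>
        ω * Real.log ((1 - p) + p / w) + ν * Real.log ((w - 1) / w) + γ * Real.log w)))
      (1 + Real.sqrt (ν / ((1 - p) * γ))) := by
  have hq : 0 < 1 - p := by linarith
  have ha : 0 < √γ := sqrt_pos.mpr hγ
  have hb : 0 < √((1 - p) * ν) := sqrt_pos.mpr (by positivity)
  have hpω : p * ω = (√γ + √((1 - p) * ν)) ^ 2 := by rw [← hrel, sq_sqrt (by positivity)]
  have hw₀ : (1 - p) * √γ * (1 + √(ν / ((1 - p) * γ)) - 1) = √((1 - p) * ν) := by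
    rw [add_sub_cancel_left, show (1 - p) * √γ = √((1 - p) ^ 2 * γ) by
      rw [sqrt_mul (by positivity), sqrt_sq hq.le], ← sqrt_mul (by positivity)]
    congr 1
    field_simp
  have hγ₅ : γ ^ ((5 : ℝ) / 2) = √γ ^ 5 := by
    rw [sqrt_eq_rpow, ← rpow_natCast, ← rpow_mul hγ.le]
    norm_num
  rw [deriv_deriv_deriv_log_potential hp1.le (lt_add_of_pos_right 1 (by positivity)),
    third_deriv_value_at_critical_point hp0 hp1 ha hb (sq_sqrt hγ.le) hpω
      (sq_sqrt (by positivity)).symm hw₀,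
    hydrodynamic_denominator_eq hp0.le hrel, hγ₅]
  exact ⟨rfl, by positivity⟩
end

section
/- Let 0 < p < 1, q = 1 − p. Let ζ : ℝ × ℝ → ℝ be differentiable at (θ₀, χ₀) with partial derivatives ζ_θ = ∂ζ/∂θ(θ₀,χ₀) and ζ_χ = ∂ζ/∂χ(θ₀,χ₀) satisfying |ζ_χ| ≤ 1, and let θ, ν, χ : ℝ → ℝ be differentiable at r₀ with θ(r₀) = θ₀, χ(r₀) = χ₀, ν(r₀) > 0. Set ζ₀ = ζ(θ₀,χ₀), γ = (ζ₀ − χ₀)/2 > 0, ω = (ζ₀ + χ₀)/2 > 0, and assume the hydrodynamic constraint √(p(ζ(θ(r),χ(r)) + χ(r))) − √(ζ(θ(r),χ(r)) − χ(r)) − √(2q ν(r)) = 0 holds for all r in a neighborhood of r₀ (with ζ(θ(r),χ(r)) ± χ(r) > 0 there). Then the function W(r) = 1 + √( 2ν(r) / ( q (ζ(θ(r),χ(r)) − χ(r)) ) ) is differentiable at r₀ with W′(r₀) = ( √p / ( 2γq ( √(pγ)(1 + ζ_χ) + √ω(1 − ζ_χ) ) ) ) · [ q ν′(r₀) ( ζ₀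 − χ₀ ζ_χ ) / ( √(pω) − √γ ) − θ′(r₀) ζ_θ ( √(pω) − √γ ) ]. -/
/-!
Differentiating the constraint `√(p(ζ + χ)) - √(ζ - χ) - √(2qν) = 0` at `r₀` gives one linear
relation between `ν'`, `θ'ζ_θ` and `χ'`. The chain rule expresses `W'(r₀)` through `ν'` and
`(ζ - χ)' = θ'ζ_θ + χ'(ζ_χ - 1)`, and eliminating `χ'` with that relation gives the formula.
At `r₀` all square roots reduce to `√p`, `√ω`, `√γ`; in particular the constraint there reads
`√(2qν(r₀)) = √2 (√(pω) - √γ)`, which is why `√(pω) - √γ` is positive.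
-/

open Real Filter Topology

theorem HasFDerivAt.comp_hasDerivAt_prodMk {𝕜 F : Type*} [NontriviallyNormedField 𝕜]
    [NormedAddCommGroup F] [NormedSpace 𝕜 F] {ζ : 𝕜 × 𝕜 → F} {L : 𝕜 × 𝕜 →L[𝕜] F}
    {θ χ : 𝕜 → 𝕜} {θ' χ' x : 𝕜}
    (hζ : HasFDerivAt ζ L (θ x, χ x)) (hθ : HasDerivAt θ θ' x) (hχ : HasDerivAt χ χ' x) :
    HasDerivAt (fun y => ζ (θ y, χ y)) (θ' • L (1, 0) + χ' • L (0, 1)) x := by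
  have h := hζ.comp_hasDerivAt x (hθ.prodMk hχ)
  rwa [show (θ', χ') = θ' • ((1 : 𝕜), (0 : 𝕜)) + χ' • ((0 : 𝕜), (1 : 𝕜)) by simp,
    map_add, map_smul, map_smul] at h

theorem HasDerivAt.eq_zero_of_eventuallyEq_zero {𝕜 F : Type*} [NontriviallyNormedField 𝕜]
    [NormedAddCommGroup F] [NormedSpace 𝕜 F] {f : 𝕜 → F} {f' : F} {x : 𝕜}
    (hf : HasDerivAt f f' x) (h : f =ᶠ[𝓝 x] 0) : f' = 0 :=
  hf.unique ((hasDerivAt_const x 0).congr_of_eventuallyEq h)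

/-- Here `s = √p`, `u = √ω`, `v = √γ`, `T = θ'ζ_θ`; `hrel` is the differentiated constraint and
the right-hand side is the chain-rule derivative of `W`, with `w` the value of its square root. -/
theorem critical_point_identity {s u v q ζχ T χ' ν' ν₀ w : ℝ} (hu : u ≠ 0) (hv : v ≠ 0)
    (hq : q ≠ 0) (hk : s * u - v ≠ 0) (hD : s * v * (1 + ζχ) + u * (1 - ζχ) ≠ 0)
    (hν₀ : q * ν₀ = (s * u - v) ^ 2) (hw : q * v * w = s * u - v)
    (hrel : s * (T + χ' * ζχ + χ') / u - (T + χ' * ζχ - χ') / v = 2 * q * ν' / (s * u - v)) :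
    s / (2 * v ^ 2 * q * (s * v * (1 + ζχ) + u * (1 - ζχ))) *
        (q * ν' * (u ^ 2 + v ^ 2 - (u ^ 2 - v ^ 2) * ζχ) / (s * u - v) - T * (s * u - v)) =
      (2 * ν' * (q * (2 * v ^ 2)) - 2 * ν₀ * (q * (T + χ' * ζχ - χ'))) / (q * (2 * v ^ 2)) ^ 2 /
        (2 * w) := by
  have hw' : w = (s * u - v) / (q * v) := by field_simp; linear_combination hw
  have hν₀' : ν₀ = (s * u - v) ^ 2 / q := by field_simp; linear_combination hν₀
  subst hw' hν₀'
  field_simp at hrel ⊢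
  linear_combination -(1 - ζχ) * (s * u - v) * hrel

theorem mul_one_add_add_mul_one_sub_pos {a b x : ℝ} (ha : 0 < a) (hb : 0 < b) (hx : |x| ≤ 1) :
    0 < a * (1 + x) + b * (1 - x) := by
  obtain ⟨h₁, h₂⟩ := abs_le.1 hx
  rcases le_total a b with h | h
  · nlinarith [mul_le_mul_of_nonneg_right h (sub_nonneg.2 h₂)]
  · nlinarith [mul_le_mul_of_nonneg_right h (neg_le_iff_add_nonneg'.1 h₁)]

theorem critical_point_derivative_formula {p γ ω ζ₀ χ₀ ν₀ ζχ T χ' ν' : ℝ} (hp0 : 0 < p)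
    (hp1 : p < 1) (hγ : 0 < γ) (hω : 0 < ω) (hν₀ : 0 < ν₀) (hγdef : γ = (ζ₀ - χ₀) / 2)
    (hωdef : ω = (ζ₀ + χ₀) / 2) (hζχ1 : |ζχ| ≤ 1)
    (hcon₀ : √(p * (2 * ω)) - √(2 * γ) - √(2 * (1 - p) * ν₀) = 0)
    (hrel : p * (T + χ' * ζχ + χ') / (2 * √(p * (2 * ω))) - (T + χ' * ζχ - χ') / (2 * √(2 * γ)) -
      2 * (1 - p) * ν' / (2 * √(2 * (1 - p) * ν₀)) = 0) :
    √p / (2 * γ * (1 - p) * (√(p * γ) * (1 + ζχ) + √ω * (1 - ζχ))) *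
        ((1 - p) * ν' * (ζ₀ - χ₀ * ζχ) / (√(p * ω) - √γ) - T * (√(p * ω) - √γ)) =
      (2 * ν' * ((1 - p) * (2 * γ)) - 2 * ν₀ * ((1 - p) * (T + χ' * ζχ - χ'))) /
        ((1 - p) * (2 * γ)) ^ 2 / (2 * √(2 * ν₀ / ((1 - p) * (2 * γ)))) := by
  have hq : 0 < 1 - p := sub_pos.2 hp1
  rw [sqrt_mul hp0.le γ, sqrt_mul hp0.le ω]
  set s := √p
  set u := √ω
  set v := √γ
  have hs2 : s ^ 2 = p := sq_sqrt hp0.le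
  have hu2 : u ^ 2 = ω := sq_sqrt hω.le
  have hv2 : v ^ 2 = γ := sq_sqrt hγ.le
  have hs0 : 0 < s := sqrt_pos.2 hp0
  have hu0 : 0 < u := sqrt_pos.2 hω
  have hv0 : 0 < v := sqrt_pos.2 hγ
  have hsA : √(p * (2 * ω)) = √2 * (s * u) := by
    rw [mul_left_comm, sqrt_mul zero_le_two, sqrt_mul hp0.le]
  have hsB : √(2 * γ) = √2 * v := sqrt_mul zero_le_two γ
  have hsN : √(2 * (1 - p) * ν₀) = √2 * (s * u - v) := by linarith
  have hk : 0 < s * u - v :=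
    pos_of_mul_pos_right (hsN ▸ sqrt_pos.2 (by positivity)) (sqrt_nonneg 2)
  have hν₀' : (1 - p) * ν₀ = (s * u - v) ^ 2 := by
    have h := congrArg (· ^ 2) hsN
    simp only [mul_pow, sq_sqrt zero_le_two, sq_sqrt (by positivity : 0 ≤ 2 * (1 - p) * ν₀)] at h
    linarith
  have hw : (1 - p) * v * √(2 * ν₀ / ((1 - p) * (2 * γ))) = s * u - v := by
    rw [show 2 * ν₀ / ((1 - p) * (2 * γ)) = ((s * u - v) / ((1 - p) * v)) ^ 2 by
      rw [div_pow, ← hν₀', ← hv2]; field_simp, sqrt_sq (by positivity)]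
    field_simp
  have hrel' : s * (T + χ' * ζχ + χ') / u - (T + χ' * ζχ - χ') / v =
      2 * (1 - p) * ν' / (s * u - v) := by
    rw [hsA, hsB, hsN, ← hs2] at hrel
    rw [← hs2]
    field_simp at hrel ⊢
    linear_combination hrel
  rw [show ζ₀ = u ^ 2 + v ^ 2 by rw [hu2, hv2]; linarith,
    show χ₀ = u ^ 2 - v ^ 2 by rw [hu2, hv2]; linarith, ← hv2]
  rw [← hv2] at hw
  exact critical_point_identity hu0.ne' hv0.ne' hq.ne' hk.ne'
    (mul_one_add_add_mul_one_sub_pos (by positivity) hu0 hζχ1).ne' hν₀' hw hrel'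

/-- differentiability and explicit derivative of the critical-point
function `W(r) = 1 + √(2ν(r)/(q(ζ(θ(r),χ(r)) − χ(r))))` along a space-like path,
under the hydrodynamic constraint. -/
theorem critical_point_derivative (p : ℝ) (hp0 : 0 < p) (hp1 : p < 1)
    (ζ : ℝ × ℝ → ℝ) (θ ν χ : ℝ → ℝ) (r₀ θ₀ χ₀ : ℝ)
    (L : ℝ × ℝ →L[ℝ] ℝ) (hζ : HasFDerivAt ζ L (θ₀, χ₀))
    (ζθ ζχ : ℝ) (hζθ : ζθ = L (1, 0)) (hζχ : ζχ = L (0, 1)) (hζχ1 : |ζχ| ≤ 1)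
    (θ' ν' χ' : ℝ)
    (hθd : HasDerivAt θ θ' r₀) (hνd : HasDerivAt ν ν' r₀) (hχd : HasDerivAt χ χ' r₀)
    (hθ0 : θ r₀ = θ₀) (hχ0 : χ r₀ = χ₀) (hν0 : 0 < ν r₀)
    (ζ₀ γ ω : ℝ) (hζ₀ : ζ₀ = ζ (θ₀, χ₀)) (hγdef : γ = (ζ₀ - χ₀) / 2)
    (hωdef : ω = (ζ₀ + χ₀) / 2) (hγ : 0 < γ) (hω : 0 < ω)
    (hcon : ∀ᶠ r in nhds r₀,
      0 < ζ (θ r, χ r) + χ r ∧ 0 < ζ (θ r, χ r) - χ r ∧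
        Real.sqrt (p * (ζ (θ r, χ r) + χ r)) - Real.sqrt (ζ (θ r, χ r) - χ r) -
          Real.sqrt (2 * (1 - p) * ν r) = 0) :
    HasDerivAt
      (fun r => 1 + Real.sqrt (2 * ν r / ((1 - p) * (ζ (θ r, χ r) - χ r))))
      ((Real.sqrt p /
          (2 * γ * (1 - p) *
            (Real.sqrt (p * γ) * (1 + ζχ) + Real.sqrt ω * (1 - ζχ)))) *
        ((1 - p) * ν' * (ζ₀ - χ₀ * ζχ) /
            (Real.sqrt (p * ω) - Real.sqrt γ) -
          θ' * ζθ * (Real.sqrt (p * ω) - Real.sqrt γ)))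
      r₀ := by
  have hZ₀ : ζ (θ r₀, χ r₀) = ζ₀ := by rw [hθ0, hχ0, hζ₀]
  have hA₀ : ζ (θ r₀, χ r₀) + χ r₀ = 2 * ω := by rw [hZ₀, hχ0, hωdef]; ring
  have hB₀ : ζ (θ r₀, χ r₀) - χ r₀ = 2 * γ := by rw [hZ₀, hχ0, hγdef]; ring
  have hZ : HasDerivAt (fun r => ζ (θ r, χ r)) (θ' * ζθ + χ' * ζχ) r₀ := by
    have h := (hθ0 ▸ hχ0 ▸ hζ).comp_hasDerivAt_prodMk hθd hχd
    rwa [smul_eq_mul, smul_eq_mul, ← hζθ, ← hζχ] at h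
  have hA : HasDerivAt (fun r => p * (ζ (θ r, χ r) + χ r)) (p * (θ' * ζθ + χ' * ζχ + χ')) r₀ :=
    (hZ.add hχd).const_mul p
  have hB : HasDerivAt (fun r => ζ (θ r, χ r) - χ r) (θ' * ζθ + χ' * ζχ - χ') r₀ := hZ.sub hχd
  have hN : HasDerivAt (fun r => 2 * (1 - p) * ν r) (2 * (1 - p) * ν') r₀ := hνd.const_mul _
  have hrel := (((hA.sqrt (by rw [hA₀]; positivity)).sub (hB.sqrt (by rw [hB₀]; positivity))).sub
    (hN.sqrt (by positivity))).eq_zero_of_eventuallyEq_zero (hcon.mono fun r hr => hr.2.2)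
  have hQ : HasDerivAt (fun r => 2 * ν r / ((1 - p) * (ζ (θ r, χ r) - χ r))) _ r₀ :=
    (hνd.const_mul 2).div (hB.const_mul (1 - p)) (by rw [hB₀]; positivity)
  have hW := (hQ.sqrt (by rw [hB₀]; positivity)).const_add 1
  have hcon₀ := hcon.self_of_nhds.2.2
  rw [hA₀, hB₀] at hrel hcon₀
  rw [hB₀] at hW
  exact hW.congr_deriv
    (critical_point_derivative_formula hp0 hp1 hγ hω hν0 hγdef hωdef hζχ1 hcon₀ hrel).symm
end

section
/- Let 0 < p < 1 and let ζ : ℝ → ℝ be differentiable with |ζ′(χ)| ≤ 1 for every χ ∈ ℝ. Let I ⊆ ℝ be an interval on which ζ(χ) + χ > 0 and ζ(χ) − χ > 0. Then the function F(χ) = √(p(ζ(χ) + χ)) − √(ζ(χ) − χ) is strictly monotone increasing on I; consequently, for every real c there is at most one χ ∈ I with F(χ) = c. -/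
open Real

/-!
Since `|ζ'| ≤ 1`, the radicand `ζ + χ` is nondecreasing and `ζ - χ` is nonincreasing, and their
derivatives differ by `2`, so at every point at least one of them moves strictly. Hence
`F' = p (ζ' + 1) / (2 √(p (ζ + χ))) + (1 - ζ') / (2 √(ζ - χ)) > 0` on `I`, and the mean value
theorem on the convex set `I` gives strict monotonicity, hence injectivity.
-/

theorem div_two_sqrt_sub_div_two_sqrt_pos {a b a' b' : ℝ} (ha : 0 < a) (hb : 0 < b)
    (ha' : 0 ≤ a') (hb' : b' ≤ 0) (hab : 0 < a' ∨ b' < 0) :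
    0 < a' / (2 * √a) - b' / (2 * √b) := by
  have hA : 0 < 2 * √a := by positivity
  have hB : 0 < 2 * √b := by positivity
  rcases hab with ha' | hb'
  · have : b' / (2 * √b) ≤ 0 := div_nonpos_of_nonpos_of_nonneg hb' hB.le
    linarith [div_pos ha' hA]
  · have : b' / (2 * √b) < 0 := div_neg_of_neg_of_pos hb' hB
    linarith [div_nonneg ha' hA.le]

theorem strictMonoOn_sqrt_sub_sqrt {f g f' g' : ℝ → ℝ} {I : Set ℝ} (hI : Convex ℝ I)
    (hf : ∀ x ∈ I, HasDerivAt f (f' x) x) (hg : ∀ x ∈ I, HasDerivAt g (g' x) x)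
    (hf₀ : ∀ x ∈ I, 0 < f x) (hg₀ : ∀ x ∈ I, 0 < g x)
    (hf' : ∀ x ∈ I, 0 ≤ f' x) (hg' : ∀ x ∈ I, g' x ≤ 0)
    (hfg' : ∀ x ∈ I, 0 < f' x ∨ g' x < 0) :
    StrictMonoOn (fun x => √(f x) - √(g x)) I := by
  have hderiv : ∀ x ∈ I, HasDerivAt (fun x => √(f x) - √(g x))
      (f' x / (2 * √(f x)) - g' x / (2 * √(g x))) x := fun x hx =>
    ((hf x hx).sqrt (hf₀ x hx).ne').sub ((hg x hx).sqrt (hg₀ x hx).ne')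
  refine strictMonoOn_of_hasDerivWithinAt_pos hI
    (fun x hx => (hderiv x hx).continuousAt.continuousWithinAt)
    (fun x hx => (hderiv x (interior_subset hx)).hasDerivWithinAt) fun x hx => ?_
  replace hx := interior_subset hx
  exact div_two_sqrt_sub_div_two_sqrt_pos (hf₀ x hx) (hg₀ x hx) (hf' x hx) (hg' x hx) (hfg' x hx)

theorem hydrodynamic_strict_mono_general (p : ℝ) (hp0 : 0 < p)
    (ζ : ℝ → ℝ) (hζ : Differentiable ℝ ζ) (hζ' : ∀ χ : ℝ, |deriv ζ χ| ≤ 1)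
    (I : Set ℝ) (hI : Convex ℝ I)
    (hpos : ∀ χ ∈ I, 0 < ζ χ + χ ∧ 0 < ζ χ - χ) :
    StrictMonoOn (fun χ => Real.sqrt (p * (ζ χ + χ)) - Real.sqrt (ζ χ - χ)) I ∧
      ∀ c : ℝ, ∀ χ₁ ∈ I, ∀ χ₂ ∈ I,
        Real.sqrt (p * (ζ χ₁ + χ₁)) - Real.sqrt (ζ χ₁ - χ₁) = c →
        Real.sqrt (p * (ζ χ₂ + χ₂)) - Real.sqrt (ζ χ₂ - χ₂) = c → χ₁ = χ₂ := by
  have hslope χ : -1 ≤ deriv ζ χ ∧ deriv ζ χ ≤ 1 := abs_le.mp (hζ' χ)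
  have mono : StrictMonoOn (fun χ => √(p * (ζ χ + χ)) - √(ζ χ - χ)) I := by
    refine strictMonoOn_sqrt_sub_sqrt (f' := fun χ => p * (deriv ζ χ + 1))
      (g' := fun χ => deriv ζ χ - 1) hI
      (fun χ _ => ((hζ χ).hasDerivAt.add (hasDerivAt_id χ)).const_mul p)
      (fun χ _ => (hζ χ).hasDerivAt.sub (hasDerivAt_id χ))
      (fun χ hχ => mul_pos hp0 (hpos χ hχ).1) (fun χ hχ => (hpos χ hχ).2)
      (fun χ _ => mul_nonneg hp0.le (by linarith [hslope χ]))
      (fun χ _ => by linarith [hslope χ]) fun χ _ => ?_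
    rcases (hslope χ).2.lt_or_eq with hlt | heq
    · exact Or.inr (by linarith)
    · exact Or.inl (by rw [heq]; positivity)
  exact ⟨mono, fun c χ₁ h₁ χ₂ h₂ e₁ e₂ => mono.injOn h₁ h₂ (e₁.trans e₂.symm)⟩

/-- the hydrodynamic function `F(χ) = √(p(ζ(χ)+χ)) − √(ζ(χ)−χ)` is
strictly monotone increasing on an interval where `ζ(χ)+χ > 0` and `ζ(χ)−χ > 0`,
provided `|ζ'| ≤ 1` everywhere; consequently for every `c` there is at most one
solution of `F(χ) = c` in the interval. -/
theorem hydrodynamic_strict_mono (p : ℝ) (hp0 : 0 < p) (hp1 : p < 1)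
    (ζ : ℝ → ℝ) (hζ : Differentiable ℝ ζ) (hζ' : ∀ χ : ℝ, |deriv ζ χ| ≤ 1)
    (I : Set ℝ) (hI : Convex ℝ I)
    (hpos : ∀ χ ∈ I, 0 < ζ χ + χ ∧ 0 < ζ χ - χ) :
    StrictMonoOn (fun χ => Real.sqrt (p * (ζ χ + χ)) - Real.sqrt (ζ χ - χ)) I ∧
      ∀ c : ℝ, ∀ χ₁ ∈ I, ∀ χ₂ ∈ I,
        Real.sqrt (p * (ζ χ₁ + χ₁)) - Real.sqrt (ζ χ₁ - χ₁) = c →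
        Real.sqrt (p * (ζ χ₂ + χ₂)) - Real.sqrt (ζ χ₂ - χ₂) = c → χ₁ = χ₂ :=
  hydrodynamic_strict_mono_general p hp0 ζ hζ hζ' I hI hpos
end
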